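/- arXiv:2502.00407 — 3 statements merged into one kernel-verified Lean document; each statement's English description precedes it below -/
import Mathlib

section
/- Let Σℓ ∈ ℝ^{ℓ×ℓ} be symmetric positive definite and Σh ∈ ℝ^{h×h} be symmetric, with h ≤ ℓ. Define f(A) = Tr((AᵀΣℓA)⁻¹ Σh) + log det(AᵀΣℓA). Let A ∈ ℝ^{ℓ×h} be such that AᵀΣℓA is positive definite, and set Ã = (AᵀΣℓA)⁻¹. Then f has Fréchet derivative at A given by the linear map H ↦ Tr(Gᵀ H), where G = 2 (Σℓ A Ã)(I_h − Σh Ã); i.e., the Euclidean gradient of f at A is 2 (Σℓ A Ã)(I_h − Σh Ã). -/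
open Matrix

attribute [local instance] Matrix.normedAddCommGroup Matrix.normedSpace

/-- The continuous linear map `H ↦ Tr(Gᵀ H)` on `ℓ×h` real matrices. -/
noncomputable def traceCLM {ℓ h : ℕ} (G : Matrix (Fin ℓ) (Fin h) ℝ) :
    Matrix (Fin ℓ) (Fin h) ℝ →L[ℝ] ℝ :=
  LinearMap.toContinuousLinearMap
    { toFun := fun H => (Gᵀ * H).trace
      map_add' := fun X Y => by simp [Matrix.mul_add]
      map_smul' := fun c X => by simp [Matrix.mul_smul] }

/-!
Write `f = φ ∘ q` with `q M = Mᵀ Σℓ M` and `φ X = Tr(X⁻¹ Σh) + log det X`. From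
`d(X⁻¹) = -X⁻¹ (dX) X⁻¹` and Jacobi's formula `d(det X) = det X · Tr(X⁻¹ dX)`, the gradient of `φ`
at `B = Aᵀ Σℓ A` is `G = B⁻¹ - B⁻¹ Σh B⁻¹`. Since `dq = (dM)ᵀ Σℓ A + Aᵀ Σℓ dM`, the chain rule turns
it into the gradient `Σℓ A Gᵀ + Σℓᵀ A G` of `f`, which is `2 Σℓ A G` because `Σℓ`, `Σh`, and hence
`G`, are symmetric.
-/

theorem map_ringInverse {M₀ N₀ F : Type*} [MonoidWithZero M₀] [MonoidWithZero N₀]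
    [EquivLike F M₀ N₀] [MulEquivClass F M₀ N₀] (φ : F) (x : M₀) :
    φ (Ring.inverse x) = Ring.inverse (φ x) := by
  by_cases hx : IsUnit x
  · simpa using (Ring.eq_mul_inverse_iff_mul_eq _ 1 _ (hx.map φ)).mpr
      (by rw [← map_mul, Ring.inverse_mul_cancel _ hx, map_one])
  · rw [Ring.inverse_non_unit _ hx, Ring.inverse_non_unit _ (by rwa [isUnit_map_iff]), map_zero]

@[simp] lemma traceCLM_apply {k m : ℕ} (G H : Matrix (Fin k) (Fin m) ℝ) :
    traceCLM G H = (Gᵀ * H).trace := rfl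

lemma traceCLM_add {k m : ℕ} (G₁ G₂ : Matrix (Fin k) (Fin m) ℝ) :
    traceCLM (G₁ + G₂) = traceCLM G₁ + traceCLM G₂ := by
  ext1 H
  simp [Matrix.add_mul]

namespace Matrix

section Multiplication

variable {𝕜 : Type*} [NontriviallyNormedField 𝕜] [CompleteSpace 𝕜] {l m n : Type*} [Fintype l]
  [Fintype m] [Fintype n]

noncomputable def mulCLM : Matrix l m 𝕜 →L[𝕜] Matrix m n 𝕜 →L[𝕜] Matrix l n 𝕜 :=
  LinearMap.toContinuousLinearMap
    (LinearMap.toContinuousLinearMap.toLinearMap ∘ₗ mulLinearMap 𝕜)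

noncomputable def transposeCLM : Matrix m n 𝕜 →L[𝕜] Matrix n m 𝕜 :=
  LinearMap.toContinuousLinearMap (transposeLinearEquiv m n 𝕜 𝕜).toLinearMap

end Multiplication

/- The sup norm on matrices is not submultiplicative, so `hasFDerivAt_ringInverse` does not apply
directly; it is transported from the complete normed algebra of operators on `EuclideanSpace`. -/
theorem hasFDerivAt_inv {𝕜 : Type*} [RCLike 𝕜] {n : Type*} [Fintype n] [DecidableEq n]
    {B : Matrix n n 𝕜} (hB : IsUnit B) :
    HasFDerivAt (fun X : Matrix n n 𝕜 => X⁻¹) (-(mulCLM B⁻¹).comp (mulCLM.flip B⁻¹)) B := by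
  let φ := toEuclideanCLM (n := n) (𝕜 := 𝕜)
  let e : Matrix n n 𝕜 ≃L[𝕜] (EuclideanSpace 𝕜 n →L[𝕜] EuclideanSpace 𝕜 n) :=
    LinearEquiv.toContinuousLinearEquiv φ.toAlgEquiv.toLinearEquiv
  have hinv : (fun X : Matrix n n 𝕜 => X⁻¹) = e.symm ∘ Ring.inverse ∘ e := by
    ext1 X
    apply e.injective
    simp only [Function.comp_apply, e.apply_symm_apply, nonsing_inv_eq_ringInverse]
    exact map_ringInverse φ X
  have heB : IsUnit (e B) := hB.map φ
  have heB_inv : (↑heB.unit⁻¹ : EuclideanSpace 𝕜 n →L[𝕜] EuclideanSpace 𝕜 n) = φ B⁻¹ := by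
    rw [← Ring.inverse_of_isUnit heB, nonsing_inv_eq_ringInverse]
    exact (map_ringInverse φ B).symm
  rw [hinv]
  refine ((e.symm.hasFDerivAt.comp _ (hasFDerivAt_ringInverse heB.unit)).comp B
    e.hasFDerivAt).congr_fderiv (ContinuousLinearMap.ext fun H => e.injective ?_)
  change e (e.symm (-(↑heB.unit⁻¹ * e H * ↑heB.unit⁻¹))) = φ (-(B⁻¹ * (H * B⁻¹)))
  rw [e.apply_symm_apply, heB_inv, map_neg, map_mul, map_mul, mul_assoc]
  rfl

section Determinant

variable {𝕜 : Type*} [NontriviallyNormedField 𝕜] {n : Type*} [Fintype n] [DecidableEq n]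

theorem differentiable_det : Differentiable 𝕜 (det : Matrix n n 𝕜 → 𝕜) := by
  simp_rw [funext det_apply']
  fun_prop

open Polynomial in
theorem hasDerivAt_det_one_add_smul (M : Matrix n n 𝕜) :
    HasDerivAt (fun t : 𝕜 => (1 + t • M).det) M.trace 0 := by
  have hpoly : (fun t : 𝕜 => (1 + t • M).det) =
      fun t => (det (1 + (X : 𝕜[X]) • M.map C)).eval t := by
    ext t
    rw [← coe_evalRingHom, RingHom.map_det]
    congr 1
    ext i j
    by_cases hij : i = j <;> simp [hij] <;> ring
  rw [hpoly, ← derivative_det_one_add_X_smul]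
  exact Polynomial.hasDerivAt _ 0

theorem hasDerivAt_det_add_smul {B : Matrix n n 𝕜} (hB : IsUnit B) (H : Matrix n n 𝕜) :
    HasDerivAt (fun t : 𝕜 => (B + t • H).det) (B.det * (B⁻¹ * H).trace) 0 := by
  have hfactor : (fun t : 𝕜 => (B + t • H).det) = fun t => B.det * (1 + t • (B⁻¹ * H)).det := by
    ext t
    rw [← det_mul, mul_add, mul_one, Matrix.mul_smul,
      mul_nonsing_inv_cancel_left _ _ ((isUnit_iff_isUnit_det B).mp hB)]
  rw [hfactor]
  exact (hasDerivAt_det_one_add_smul _).const_mul _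

end Determinant

theorem hasFDerivAt_det {k : ℕ} {B : Matrix (Fin k) (Fin k) ℝ} (hB : IsUnit B) :
    HasFDerivAt det (traceCLM (B.det • B⁻¹ᵀ)) B := by
  have hd := (differentiable_det B).hasFDerivAt
  refine hd.congr_fderiv (ContinuousLinearMap.ext fun H => (hd.hasLineDerivAt H).unique ?_)
  unfold HasLineDerivAt
  simpa [trace_smul] using hasDerivAt_det_add_smul hB H

theorem hasFDerivAt_log_det {k : ℕ} {B : Matrix (Fin k) (Fin k) ℝ} (hB : IsUnit B) :
    HasFDerivAt (fun X => Real.log X.det) (traceCLM B⁻¹ᵀ) B := by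
  have hdet : B.det ≠ 0 := ((isUnit_iff_isUnit_det B).mp hB).ne_zero
  refine ((Real.hasDerivAt_log hdet).comp_hasFDerivAt B (hasFDerivAt_det hB)).congr_fderiv
    (ContinuousLinearMap.ext fun H => ?_)
  show B.det⁻¹ * traceCLM (B.det • B⁻¹ᵀ) H = traceCLM B⁻¹ᵀ H
  simp [hdet]

theorem hasFDerivAt_trace_inv_mul {k : ℕ} {B : Matrix (Fin k) (Fin k) ℝ} (hB : IsUnit B)
    (S : Matrix (Fin k) (Fin k) ℝ) :
    HasFDerivAt (fun X => (X⁻¹ * S).trace) (traceCLM (-(B⁻¹ * S * B⁻¹)ᵀ)) B := by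
  have h := (traceCLM Sᵀ).hasFDerivAt.comp B (hasFDerivAt_inv hB)
  simp only [Function.comp_def, traceCLM_apply, transpose_transpose] at h
  simp_rw [trace_mul_comm _ S]
  refine h.congr_fderiv (ContinuousLinearMap.ext fun H => ?_)
  show traceCLM Sᵀ (-(B⁻¹ * (H * B⁻¹))) = traceCLM (-(B⁻¹ * S * B⁻¹)ᵀ) H
  simp only [traceCLM_apply, transpose_transpose, transpose_neg, Matrix.mul_neg, Matrix.neg_mul,
    trace_neg, neg_inj]
  rw [Matrix.mul_assoc, Matrix.mul_assoc, trace_mul_comm B⁻¹]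
  simp only [Matrix.mul_assoc]

end Matrix

theorem HasFDerivAt.comp_transpose_mul_mul {k m : ℕ} {φ : Matrix (Fin m) (Fin m) ℝ → ℝ}
    {S : Matrix (Fin k) (Fin k) ℝ} {A : Matrix (Fin k) (Fin m) ℝ} {G : Matrix (Fin m) (Fin m) ℝ}
    (hφ : HasFDerivAt φ (traceCLM G) (Aᵀ * S * A)) :
    HasFDerivAt (fun M => φ (Mᵀ * S * M)) (traceCLM (S * A * Gᵀ + Sᵀ * A * G)) A := by
  have hq : HasFDerivAt (fun M : Matrix (Fin k) (Fin m) ℝ => Mᵀ * S * M) _ A :=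
    mulCLM.hasFDerivAt_of_bilinear ((mulCLM.flip S).comp transposeCLM).hasFDerivAt
      (hasFDerivAt_id A)
  refine (hφ.comp (f := fun M => Mᵀ * S * M) A hq).congr_fderiv
    (ContinuousLinearMap.ext fun H => ?_)
  show traceCLM G (Aᵀ * S * H + Hᵀ * S * A) = traceCLM (S * A * Gᵀ + Sᵀ * A * G) H
  have hcross : (Gᵀ * (Hᵀ * (S * A))).trace = (G * (Aᵀ * (Sᵀ * H))).trace := by
    rw [← trace_transpose, trace_mul_comm G]
    simp only [transpose_mul, transpose_transpose, Matrix.mul_assoc]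
  simp only [traceCLM_apply, Matrix.mul_add, trace_add, transpose_add, transpose_mul,
    transpose_transpose, Matrix.add_mul, Matrix.mul_assoc, hcross]
  ring

theorem stmt_3_general {ℓ h : ℕ}
    (Sl : Matrix (Fin ℓ) (Fin ℓ) ℝ) (hSl : Sl.PosDef)
    (Sh : Matrix (Fin h) (Fin h) ℝ) (hSh : Sh.IsSymm)
    (A : Matrix (Fin ℓ) (Fin h) ℝ) (hA : (Aᵀ * Sl * A).PosDef) :
    HasFDerivAt
      (fun M : Matrix (Fin ℓ) (Fin h) ℝ =>
        ((Mᵀ * Sl * M)⁻¹ * Sh).trace + Real.log (Mᵀ * Sl * M).det)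
      (traceCLM ((2 : ℝ) •
        ((Sl * A * (Aᵀ * Sl * A)⁻¹) * (1 - Sh * (Aᵀ * Sl * A)⁻¹))))
      A := by
  set B := Aᵀ * Sl * A
  have hφ : HasFDerivAt (fun X => (X⁻¹ * Sh).trace + Real.log X.det)
      (traceCLM (-(B⁻¹ * Sh * B⁻¹)ᵀ + B⁻¹ᵀ)) B := by
    rw [traceCLM_add]
    exact (hasFDerivAt_trace_inv_mul hA.isUnit Sh).add (hasFDerivAt_log_det hA.isUnit)
  have hSl_symm : Slᵀ = Sl := (isHermitian_iff_isSymm.mp hSl.isHermitian).eq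
  have hB_inv_symm : B⁻¹ᵀ = B⁻¹ := (isHermitian_iff_isSymm.mp hA.isHermitian).inv.eq
  convert hφ.comp_transpose_mul_mul using 2
  simp only [transpose_add, transpose_neg, transpose_mul, hSl_symm, hB_inv_symm, hSh.eq]
  simp only [two_smul, Matrix.mul_sub, Matrix.mul_add, Matrix.mul_neg, Matrix.mul_one,
    Matrix.mul_assoc]
  abel

/-- The Euclidean gradient of `f(A) = Tr((AᵀΣℓA)⁻¹ Σh) + log det(AᵀΣℓA)` at a point `A`
where `AᵀΣℓA` is positive definite is `G = 2 (Σℓ A Ã)(I_h − Σh Ã)`, with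
`Ã = (AᵀΣℓA)⁻¹`; i.e. `f` has Fréchet derivative `H ↦ Tr(Gᵀ H)` at `A`. -/
theorem stmt_3 {ℓ h : ℕ} (hle : h ≤ ℓ)
    (Sl : Matrix (Fin ℓ) (Fin ℓ) ℝ) (hSl : Sl.PosDef)
    (Sh : Matrix (Fin h) (Fin h) ℝ) (hSh : Sh.IsSymm)
    (A : Matrix (Fin ℓ) (Fin h) ℝ) (hA : (Aᵀ * Sl * A).PosDef) :
    HasFDerivAt
      (fun M : Matrix (Fin ℓ) (Fin h) ℝ =>
        ((Mᵀ * Sl * M)⁻¹ * Sh).trace + Real.log (Mᵀ * Sl * M).det)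
      (traceCLM ((2 : ℝ) •
        ((Sl * A * (Aᵀ * Sl * A)⁻¹) * (1 - Sh * (Aᵀ * Sl * A)⁻¹))))
      A :=
  stmt_3_general Sl hSl Sh hSh A hA
end

section
/- Let Σℓ ∈ ℝ^{ℓ×ℓ} be symmetric positive definite, Σh ∈ ℝ^{h×h} symmetric, and B, S ∈ ℝ^{ℓ×h} fixed matrices. Define, for V ∈ ℝ^{ℓ×h}, A(V) = B⊙S⊙V and f(V) = Tr((A(V)ᵀΣℓA(V))⁻¹ Σh) + log det(A(V)ᵀΣℓA(V)). Let V be such that A = A(V) satisfies that AᵀΣℓA is positive definite, and set Ã = (AᵀΣℓA)⁻¹. Then f has Fréchet derivative at V given by H ↦ Tr(Gᵀ H) with gradient G = 2 (B⊙S) ⊙ ((Σℓ A Ã)(I_h − Σh Ã)). -/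
/-!
Write the objective as `g ∘ q ∘ c` with `c W = (B ⊙ S) ⊙ W`, `q A = Aᵀ Σℓ A` and
`g M = Tr(M⁻¹ Σh) + log det M`. Jacobi's formula `d(log det M) = Tr(M⁻¹ dM)` and
`d(M⁻¹) = -M⁻¹ dM M⁻¹` give `dg = Tr(P dM)` with `P = M⁻¹(1 - Σh M⁻¹)`, which is symmetric
when `M` and `Σh` are. Since `dq = dAᵀ Σℓ A + Aᵀ Σℓ dA`, symmetry of `P` and `Σℓ` turns
`Tr(P dq)` into `2 Tr((Σℓ A P)ᵀ dA)`, and pulling back through the Hadamard product multiplies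
the gradient entrywise by `B ⊙ S`.
-/

open Matrix

attribute [local instance] Matrix.normedAddCommGroup Matrix.normedSpace

namespace Matrix

section Algebra

variable {R : Type*} [CommRing R] {m n : Type*} [Fintype m] [Fintype n]

theorem det_updateRow_eq_sum_mul_adjugate [DecidableEq n] (M : Matrix n n R) (i : n)
    (r : n → R) : (M.updateRow i r).det = ∑ j, r j * M.adjugate j i := by
  rw [det_eq_sum_mul_adjugate_row _ i]
  simp only [updateRow_self, adjugate_apply, updateRow_idem]

theorem trace_mul_hadamard (Q : Matrix n m R) (C H : Matrix m n R) :
    trace (Q * (C ⊙ H)) = trace ((Cᵀ ⊙ Q) * H) := by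
  conv_lhs => rw [← transpose_transpose (C ⊙ H), ← sum_hadamard_eq, transpose_hadamard,
    ← hadamard_assoc, hadamard_comm Q Cᵀ, sum_hadamard_eq, transpose_transpose]

theorem trace_mul_transpose_mul_mul_add (P : Matrix n n R) (S : Matrix m m R)
    (A K : Matrix m n R) :
    trace (P * (Aᵀ * S * K + Kᵀ * S * A)) = trace ((P * Aᵀ * S + Pᵀ * Aᵀ * Sᵀ) * K) := by
  have hK : trace (P * (Kᵀ * S * A)) = trace (Pᵀ * Aᵀ * Sᵀ * K) := by
    rw [← trace_transpose, transpose_mul, Matrix.trace_mul_comm]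
    simp only [transpose_mul, transpose_transpose, Matrix.mul_assoc]
  rw [Matrix.mul_add, trace_add, hK, Matrix.add_mul, trace_add]
  simp only [Matrix.mul_assoc]

theorem IsSymm.inv_mul_one_sub_mul_inv [DecidableEq n] {M S : Matrix n n R} (hM : M.IsSymm)
    (hS : S.IsSymm) : (M⁻¹ * (1 - S * M⁻¹)).IsSymm := by
  have hMinv : M⁻¹ᵀ = M⁻¹ := by rw [transpose_nonsing_inv, hM.eq]
  rw [IsSymm, transpose_mul, transpose_sub, transpose_one, transpose_mul, hMinv, hS.eq,
    Matrix.sub_mul, Matrix.mul_sub, Matrix.one_mul, Matrix.mul_one, Matrix.mul_assoc]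

end Algebra

section Calculus

variable {𝕜 : Type*} [NontriviallyNormedField 𝕜] [CompleteSpace 𝕜] {m n : Type*}
  [Fintype m] [Fintype n]

-- Its type is elaborated with the plain `Matrix` topology and module instances, defeq but not
-- syntactically equal to the normed ones in `HasFDerivAt`; applications are unfolded by `change`.
noncomputable def traceMulCLM (P : Matrix n m 𝕜) : Matrix m n 𝕜 →L[𝕜] 𝕜 :=
  LinearMap.toContinuousLinearMap ((traceLinearMap n 𝕜 𝕜).comp (mulLeftLinearMap n 𝕜 P))

theorem hasFDerivAt_det_s6 [DecidableEq n] (M : Matrix n n 𝕜) :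
    HasFDerivAt det (traceMulCLM M.adjugate) M := by
  -- `det` is multilinear in the rows; cofactor expansion evaluates each row-updated determinant.
  let D : ContinuousMultilinearMap 𝕜 (fun _ : n => n → 𝕜) 𝕜 :=
    ⟨(detRowAlternating : (n → 𝕜) [⋀^n]→ₗ[𝕜] 𝕜).toMultilinearMap, continuous_id.matrix_det⟩
  refine (D.hasFDerivAt M).congr_fderiv
    (ContinuousLinearMap.ext fun H : Matrix n n 𝕜 => (D.linearDeriv_apply M H).trans ?_)
  change ∑ i, (M.updateRow i (H i)).det = trace (M.adjugate * H)
  simp only [det_updateRow_eq_sum_mul_adjugate, trace, diag, mul_apply]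
  rw [Finset.sum_comm]
  simp only [mul_comm]

theorem hasFDerivAt_inv_s6 [DecidableEq n] {M : Matrix n n 𝕜} (hM : IsUnit M.det) :
    HasFDerivAt (fun X : Matrix n n 𝕜 => X⁻¹)
      (-LinearMap.toContinuousLinearMap
        ((mulLeftLinearMap n 𝕜 M⁻¹).comp (mulRightLinearMap n 𝕜 M⁻¹))) M := by
  obtain ⟨u, rfl⟩ := (isUnit_iff_isUnit_det M).2 hM
  -- `Ring.inverse` is differentiated in a normed ring; the ℓ∞-operator norm makes `Matrix n n 𝕜`
  -- one with the same topology as the sup norm, and `HasFDerivAt` only sees the topology.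
  rw [show (fun X : Matrix n n 𝕜 => X⁻¹) = Ring.inverse from funext nonsing_inv_eq_ringInverse]
  let R := Matrix.linftyOpNormedRing (n := n) (α := 𝕜)
  let := Matrix.linftyOpNormedAlgebra (n := n) (R := 𝕜) (α := 𝕜)
  have : @CompleteSpace (Matrix n n 𝕜) R.toUniformSpace := FiniteDimensional.complete 𝕜 _
  refine (hasFDerivAt_ringInverse (𝕜 := 𝕜) u).congr_fderiv
    (ContinuousLinearMap.ext fun H => ?_)
  change -((↑u⁻¹ : Matrix n n 𝕜) * H * (↑u⁻¹ : Matrix n n 𝕜))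
    = -((u : Matrix n n 𝕜)⁻¹ * (H * (u : Matrix n n 𝕜)⁻¹))
  rw [coe_units_inv, Matrix.mul_assoc]

theorem hasFDerivAt_trace_inv_mul_s6 [DecidableEq n] (S : Matrix n n 𝕜) {M : Matrix n n 𝕜}
    (hM : IsUnit M.det) :
    HasFDerivAt (fun X : Matrix n n 𝕜 => trace (X⁻¹ * S)) (traceMulCLM (-(M⁻¹ * S * M⁻¹))) M := by
  rw [show (fun X : Matrix n n 𝕜 => trace (X⁻¹ * S)) = fun X => traceMulCLM S X⁻¹ from
    funext fun X => trace_mul_comm _ _]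
  refine ((traceMulCLM S).hasFDerivAt.comp M (hasFDerivAt_inv_s6 hM)).congr_fderiv
    (ContinuousLinearMap.ext fun H => ?_)
  change trace (S * -(M⁻¹ * (H * M⁻¹))) = trace (-(M⁻¹ * S * M⁻¹) * H)
  rw [Matrix.mul_neg, Matrix.neg_mul, trace_neg, trace_neg,
    show S * (M⁻¹ * (H * M⁻¹)) = S * M⁻¹ * H * M⁻¹ by simp only [Matrix.mul_assoc],
    Matrix.trace_mul_comm]
  simp only [Matrix.mul_assoc]

theorem hasFDerivAt_comp_hadamard {g : Matrix m n 𝕜 → 𝕜} {Q : Matrix n m 𝕜}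
    (C : Matrix m n 𝕜) {V : Matrix m n 𝕜} (hg : HasFDerivAt g (traceMulCLM Q) (C ⊙ V)) :
    HasFDerivAt (fun W => g (C ⊙ W)) (traceMulCLM (Cᵀ ⊙ Q)) V := by
  let L : Matrix m n 𝕜 →L[𝕜] Matrix m n 𝕜 :=
    LinearMap.toContinuousLinearMap
      ⟨⟨(C ⊙ ·), fun X Y => hadamard_add C X Y⟩, fun c X => hadamard_smul C X c⟩
  refine (hg.comp V L.hasFDerivAt).congr_fderiv (ContinuousLinearMap.ext fun H => ?_)
  exact trace_mul_hadamard Q C H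

theorem hasFDerivAt_comp_transpose_mul_mul {g : Matrix n n 𝕜 → 𝕜} {P : Matrix n n 𝕜}
    (S : Matrix m m 𝕜) {A : Matrix m n 𝕜} (hg : HasFDerivAt g (traceMulCLM P) (Aᵀ * S * A)) :
    HasFDerivAt (fun X => g (Xᵀ * S * X)) (traceMulCLM (P * Aᵀ * S + Pᵀ * Aᵀ * Sᵀ)) A := by
  let Q : Matrix m n 𝕜 →L[𝕜] Matrix m n 𝕜 →L[𝕜] Matrix n n 𝕜 :=
    (LinearMap.mk₂ 𝕜 (fun X Y : Matrix m n 𝕜 => Xᵀ * S * Y)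
      (fun X X' Y => by simp [Matrix.add_mul]) (fun c X Y => by simp)
      (fun X Y Y' => by simp [Matrix.mul_add]) (fun c X Y => by simp)).toContinuousBilinearMap
  have hQ : HasFDerivAt (fun X : Matrix m n 𝕜 => Xᵀ * S * X) _ A :=
    Q.hasFDerivAt_of_bilinear (hasFDerivAt_id A) (hasFDerivAt_id A)
  have h := hg.comp (f := fun X : Matrix m n 𝕜 => Xᵀ * S * X) A hQ
  refine h.congr_fderiv (ContinuousLinearMap.ext fun K => ?_)
  exact trace_mul_transpose_mul_mul_add P S A K

end Calculus

section Real

variable {n : Type*} [Fintype n] [DecidableEq n]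

theorem hasFDerivAt_log_det_s6 {M : Matrix n n ℝ} (hM : M.det ≠ 0) :
    HasFDerivAt (fun X : Matrix n n ℝ => Real.log X.det) (traceMulCLM M⁻¹) M := by
  refine ((Real.hasDerivAt_log hM).comp_hasFDerivAt M (hasFDerivAt_det_s6 M)).congr_fderiv
    (ContinuousLinearMap.ext fun H => ?_)
  change M.det⁻¹ * trace (M.adjugate * H) = trace (M⁻¹ * H)
  rw [inv_def, Ring.inverse_eq_inv', smul_mul, trace_smul, smul_eq_mul]

theorem hasFDerivAt_trace_inv_mul_add_log_det (S : Matrix n n ℝ) {M : Matrix n n ℝ}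
    (hM : M.det ≠ 0) :
    HasFDerivAt (fun X : Matrix n n ℝ => trace (X⁻¹ * S) + Real.log X.det)
      (traceMulCLM (M⁻¹ * (1 - S * M⁻¹))) M := by
  refine ((hasFDerivAt_trace_inv_mul_s6 S hM.isUnit).add (hasFDerivAt_log_det_s6 hM)).congr_fderiv
    (ContinuousLinearMap.ext fun H => ?_)
  change trace (-(M⁻¹ * S * M⁻¹) * H) + trace (M⁻¹ * H) = trace (M⁻¹ * (1 - S * M⁻¹) * H)
  rw [← trace_add, ← Matrix.add_mul]
  congr 2
  noncomm_ring

end Real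

end Matrix

/-- Partial derivative w.r.t. `V` of the partial-prior objective
`f(V) = Tr((A(V)ᵀΣℓA(V))⁻¹ Σh) + log det(A(V)ᵀΣℓA(V))`, `A(V) = B⊙S⊙V`:
the Euclidean gradient at `V` is `2 (B⊙S) ⊙ ((Σℓ A Ã)(I_h − Σh Ã))`,
with `A = B⊙S⊙V` and `Ã = (AᵀΣℓA)⁻¹`. -/
theorem stmt_6 {ℓ h : ℕ}
    (Sl : Matrix (Fin ℓ) (Fin ℓ) ℝ) (hSl : Sl.PosDef)
    (Sh : Matrix (Fin h) (Fin h) ℝ) (hSh : Sh.IsSymm)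
    (B S V : Matrix (Fin ℓ) (Fin h) ℝ)
    (hpd : ((B ⊙ S ⊙ V)ᵀ * Sl * (B ⊙ S ⊙ V)).PosDef) :
    HasFDerivAt
      (fun W : Matrix (Fin ℓ) (Fin h) ℝ =>
        (((B ⊙ S ⊙ W)ᵀ * Sl * (B ⊙ S ⊙ W))⁻¹ * Sh).trace +
          Real.log ((B ⊙ S ⊙ W)ᵀ * Sl * (B ⊙ S ⊙ W)).det)
      (traceCLM ((2 : ℝ) •
        ((B ⊙ S) ⊙
          ((Sl * (B ⊙ S ⊙ V) * ((B ⊙ S ⊙ V)ᵀ * Sl * (B ⊙ S ⊙ V))⁻¹) *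
            (1 - Sh * ((B ⊙ S ⊙ V)ᵀ * Sl * (B ⊙ S ⊙ V))⁻¹)))))
      V := by
  set A := B ⊙ S ⊙ V
  set M := Aᵀ * Sl * A
  set P := M⁻¹ * (1 - Sh * M⁻¹)
  have hSl' : Slᵀ = Sl := (isHermitian_iff_isSymm.1 hSl.isHermitian).eq
  have hP : Pᵀ = P :=
    (IsSymm.inv_mul_one_sub_mul_inv (isHermitian_iff_isSymm.1 hpd.isHermitian) hSh).eq
  have h := hasFDerivAt_comp_hadamard (B ⊙ S) (hasFDerivAt_comp_transpose_mul_mul Sl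
    (hasFDerivAt_trace_inv_mul_add_log_det Sh hpd.det_pos.ne'))
  refine h.congr_fderiv (ContinuousLinearMap.ext fun H => ?_)
  change trace (((B ⊙ S)ᵀ ⊙ (P * Aᵀ * Sl + Pᵀ * Aᵀ * Slᵀ)) * H)
    = trace (((2 : ℝ) • ((B ⊙ S) ⊙ (Sl * A * M⁻¹ * (1 - Sh * M⁻¹))))ᵀ * H)
  rw [show Sl * A * M⁻¹ * (1 - Sh * M⁻¹) = Sl * A * P by simp only [P, Matrix.mul_assoc]]
  clear_value P A
  rw [transpose_smul, transpose_hadamard (B ⊙ S), transpose_mul, transpose_mul, hP, hSl',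
    ← Matrix.mul_assoc, two_smul, hadamard_add]
end

section
/- Let ℓ, h be positive integers, τ, ρ > 0 real numbers, and let B ∈ {0,1}^{ℓ×h}, S, V^q, Y, U, G ∈ ℝ^{ℓ×h}. Define φ(V) = Tr(Gᵀ(V − V^q)) + (τ/2)‖V − V^q‖²_F + (ρ/2)‖B⊙S⊙V − Y + U‖²_F. Then φ has a unique global minimizer V* over ℝ^{ℓ×h}, given entrywise by v*_{ij} = (ρ b_{ij} s_{ij} (y_{ij} − u_{ij}) + τ v^q_{ij} − g_{ij}) / (τ + ρ b_{ij} s_{ij}²), where b_{ij}² = b_{ij} is used since b_{ij} ∈ {0,1}. -/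
/-!
Both the trace term and the two squared Frobenius norms split over the entries, so `φ` is a sum
of independent one-variable quadratics. Completing the square in each, with leading coefficient
`(τ + ρ (b s)²) / 2 = (τ + ρ b s²) / 2 > 0` because `b² = b`, writes `φ W` as `φ V*` plus a sum of
positive multiples of `(W i j - V* i j)²`, which is nonnegative and vanishes only at `W = V*`.
-/

open Matrix

theorem trace_transpose_mul_eq_sum_mul {m n : Type*} [Fintype m] [Fintype n]
    (A B : Matrix m n ℝ) : (Aᵀ * B).trace = ∑ i, ∑ j, A i j * B i j := by
  rw [trace_mul_comm, ← sum_hadamard_eq]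
  simp only [hadamard_apply, mul_comm]

theorem linear_add_sq_add_sq_eq_at_vertex_add_sq (τ ρ c r v₀ g w : ℝ) (ha : τ + ρ * c ^ 2 ≠ 0) :
    let w₀ := (ρ * c * r + τ * v₀ - g) / (τ + ρ * c ^ 2)
    g * (w - v₀) + τ / 2 * (w - v₀) ^ 2 + ρ / 2 * (c * w - r) ^ 2
      = g * (w₀ - v₀) + τ / 2 * (w₀ - v₀) ^ 2 + ρ / 2 * (c * w₀ - r) ^ 2
        + (τ + ρ * c ^ 2) / 2 * (w - w₀) ^ 2 := by
  intro w₀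
  simp only [w₀]
  field_simp
  ring

theorem sum_sum_mul_sq_nonneg {m n : Type*} [Fintype m] [Fintype n] {a : m → n → ℝ}
    (ha : ∀ i j, 0 < a i j) (D : Matrix m n ℝ) : 0 ≤ ∑ i, ∑ j, a i j * D i j ^ 2 :=
  Finset.sum_nonneg fun i _ => Finset.sum_nonneg fun j _ => by
    have := ha i j
    positivity

theorem sum_sum_mul_sq_eq_zero_iff {m n : Type*} [Fintype m] [Fintype n] {a : m → n → ℝ}
    (ha : ∀ i j, 0 < a i j) (D : Matrix m n ℝ) : ∑ i, ∑ j, a i j * D i j ^ 2 = 0 ↔ D = 0 := by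
  have hterm : ∀ i j, 0 ≤ a i j * D i j ^ 2 := fun i j => by
    have := ha i j
    positivity
  refine ⟨fun hsum => ext fun i j => ?_, fun hD => by simp [hD]⟩
  have hrow := (Finset.sum_eq_zero_iff_of_nonneg fun i _ => Finset.sum_nonneg fun j _ =>
    hterm i j).mp hsum i (Finset.mem_univ i)
  have hij := (Finset.sum_eq_zero_iff_of_nonneg fun j _ => hterm i j).mp hrow j (Finset.mem_univ j)
  simpa [(ha i j).ne'] using hij

theorem forall_le_and_unique_of_eq_add_sum_mul_sq {m n : Type*} [Fintype m] [Fintype n]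
    {a : m → n → ℝ} (ha : ∀ i j, 0 < a i j) (f : Matrix m n ℝ → ℝ) (X : Matrix m n ℝ)
    (hf : ∀ W, f W = f X + ∑ i, ∑ j, a i j * (W - X) i j ^ 2) :
    (∀ W, f X ≤ f W) ∧ ∀ W, (∀ V, f W ≤ f V) → W = X := by
  refine ⟨fun W => ?_, fun W hW => ?_⟩
  · linarith [hf W, sum_sum_mul_sq_nonneg ha (W - X)]
  · have hzero : ∑ i, ∑ j, a i j * (W - X) i j ^ 2 = 0 :=
      le_antisymm (by linarith [hf W, hW X]) (sum_sum_mul_sq_nonneg ha (W - X))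
    exact sub_eq_zero.mp ((sum_sum_mul_sq_eq_zero_iff ha (W - X)).mp hzero)

theorem stmt_9_general {ℓ h : ℕ}
    (τ ρ : ℝ) (hτ : 0 < τ) (hρ : 0 < ρ)
    (B S Vq Y U G : Matrix (Fin ℓ) (Fin h) ℝ)
    (hB : ∀ i j, B i j = 0 ∨ B i j = 1) :
    let φ : Matrix (Fin ℓ) (Fin h) ℝ → ℝ := fun V =>
      (Gᵀ * (V - Vq)).trace
        + τ / 2 * ∑ i, ∑ j, (V i j - Vq i j) ^ 2
        + ρ / 2 * ∑ i, ∑ j, ((B ⊙ S ⊙ V) i j - Y i j + U i j) ^ 2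
    let Vstar : Matrix (Fin ℓ) (Fin h) ℝ := Matrix.of fun i j =>
      (ρ * B i j * S i j * (Y i j - U i j) + τ * Vq i j - G i j)
        / (τ + ρ * B i j * S i j ^ 2)
    (∀ W, φ Vstar ≤ φ W) ∧ ∀ W, (∀ V', φ W ≤ φ V') → W = Vstar := by
  intro φ Vstar
  have hBS : ∀ i j, (B i j * S i j) ^ 2 = B i j * S i j ^ 2 := fun i j => by
    rcases hB i j with hb | hb <;> simp [hb]
  have hcoef : ∀ i j, 0 < (τ + ρ * (B i j * S i j) ^ 2) / 2 := fun i j => by positivity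
  have hsep : ∀ V, φ V = ∑ i, ∑ j, (G i j * (V i j - Vq i j) + τ / 2 * (V i j - Vq i j) ^ 2
      + ρ / 2 * (B i j * S i j * V i j - (Y i j - U i j)) ^ 2) := fun V => by
    simp only [φ, trace_transpose_mul_eq_sum_mul, Finset.mul_sum, ← Finset.sum_add_distrib]
    refine Finset.sum_congr rfl fun i _ => Finset.sum_congr rfl fun j _ => ?_
    simp only [Matrix.sub_apply, hadamard_apply]
    ring
  refine forall_le_and_unique_of_eq_add_sum_mul_sq hcoef φ Vstar fun W => ?_
  rw [hsep, hsep, ← Finset.sum_add_distrib]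
  refine Finset.sum_congr rfl fun i _ => ?_
  rw [← Finset.sum_add_distrib]
  refine Finset.sum_congr rfl fun j _ => ?_
  have hVstar : Vstar i j = (ρ * (B i j * S i j) * (Y i j - U i j) + τ * Vq i j - G i j)
      / (τ + ρ * (B i j * S i j) ^ 2) := by
    simp only [Vstar, of_apply, hBS, mul_assoc]
  rw [Matrix.sub_apply, hVstar]
  exact linear_add_sq_add_sq_eq_at_vertex_add_sq τ ρ _ _ _ _ _ (by positivity)

/-- The strongly convex `V`-subproblem of CLinSEPAL (partial prior):
`φ(V) = Tr(Gᵀ(V−Vq)) + (τ/2)‖V−Vq‖²_F + (ρ/2)‖B⊙S⊙V − Y + U‖²_F` has the unique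
global minimizer given entrywise by
`v*_{ij} = (ρ b_{ij} s_{ij}(y_{ij} − u_{ij}) + τ v^q_{ij} − g_{ij}) / (τ + ρ b_{ij} s_{ij}²)`. -/
theorem stmt_9 {ℓ h : ℕ} (hℓ : 0 < ℓ) (hh : 0 < h)
    (τ ρ : ℝ) (hτ : 0 < τ) (hρ : 0 < ρ)
    (B S Vq Y U G : Matrix (Fin ℓ) (Fin h) ℝ)
    (hB : ∀ i j, B i j = 0 ∨ B i j = 1) :
    let φ : Matrix (Fin ℓ) (Fin h) ℝ → ℝ := fun V =>
      (Gᵀ * (V - Vq)).trace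
        + τ / 2 * ∑ i, ∑ j, (V i j - Vq i j) ^ 2
        + ρ / 2 * ∑ i, ∑ j, ((B ⊙ S ⊙ V) i j - Y i j + U i j) ^ 2
    let Vstar : Matrix (Fin ℓ) (Fin h) ℝ := Matrix.of fun i j =>
      (ρ * B i j * S i j * (Y i j - U i j) + τ * Vq i j - G i j)
        / (τ + ρ * B i j * S i j ^ 2)
    (∀ W, φ Vstar ≤ φ W) ∧ ∀ W, (∀ V', φ W ≤ φ V') → W = Vstar :=
  stmt_9_general τ ρ hτ hρ B S Vq Y U G hB
end
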